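/- For every r > 0, the 4-dimensional Lebesgue measure of the set {(x, y) ∈ ℝ² × ℝ² : ‖x‖ ≤ r, ‖y‖ ≤ r, ‖x − y‖ ≤ r} equals (π − 3√3/4) · π · r⁴, where ‖·‖ denotes the Euclidean norm on ℝ². (This is the expected number of triangles per unit squared density in a two-dimensional random geometric graph: E[t_i] = (π − 3√3/4)π (nr²)².) -/

import Mathlib

/-!
By homogeneity the region for radius `r` is `r` times the region for radius `1`, so its measure
is `r⁴` times that of the latter. Slicing at a fixed first point `x` with `‖x‖ ≤ 1`, the fibre is
the intersection of the unit discs centred at `0` and `x`: after a rotation taking `x` to `(d, 0)`,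
integrating the chord length in the first coordinate shows that this lens has area
`π - d √(1 - d²/4) - 2 arcsin (d/2)` with `d = ‖x‖`. In polar coordinates the measure of the region
is then `2π ∫₀¹ y · lensArea y dy = 2π (π/2 - 3√3/8)`.
-/

open MeasureTheory Metric Real Set intervalIntegral
open scoped Pointwise

noncomputable section

def lensArea (d : ℝ) : ℝ :=
  π - d * √(1 - d ^ 2 / 4) - 2 * arcsin (d / 2)

lemma continuous_lensArea : Continuous lensArea := by
  unfold lensArea
  fun_prop

lemma hasDerivAt_arcsin_add_mul_sqrt_one_sub_sq {x : ℝ} (h₁ : -1 < x) (h₂ : x < 1) :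
    HasDerivAt (fun x => (arcsin x + x * √(1 - x ^ 2)) / 2) √(1 - x ^ 2) x := by
  have hpos : 0 < 1 - x ^ 2 := by nlinarith
  have hsqrt : HasDerivAt (fun x => √(1 - x ^ 2)) (-(2 * x) / (2 * √(1 - x ^ 2))) x := by
    refine HasDerivAt.sqrt ?_ hpos.ne'
    simpa using (hasDerivAt_pow 2 x).const_sub 1
  refine (((hasDerivAt_arcsin h₁.ne' h₂.ne).add ((hasDerivAt_id' x).mul hsqrt)).div_const 2)
    |>.congr_deriv ?_
  have hne : √(1 - x ^ 2) ≠ 0 := (sqrt_pos.mpr hpos).ne'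
  field_simp
  rw [sq_sqrt hpos.le]
  ring

lemma integral_sqrt_one_sub_sq_eq {a b : ℝ} (ha : a ∈ Icc (-1) 1) (hb : b ∈ Icc (-1) 1) :
    ∫ x in a..b, √(1 - x ^ 2) =
      (arcsin b + b * √(1 - b ^ 2)) / 2 - (arcsin a + a * √(1 - a ^ 2)) / 2 := by
  refine integral_eq_sub_of_hasDeriv_right (f := fun x => (arcsin x + x * √(1 - x ^ 2)) / 2)
    (by fun_prop) (fun x hx => ?_) (Continuous.intervalIntegrable (by fun_prop) _ _)
  refine (hasDerivAt_arcsin_add_mul_sqrt_one_sub_sq ?_ ?_).hasDerivWithinAt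
  · exact lt_of_le_of_lt (le_min ha.1 hb.1) hx.1
  · exact lt_of_lt_of_le hx.2 (max_le ha.2 hb.2)

lemma lensArea_eq_integral {d : ℝ} (hd : d ∈ Icc (-2) 2) :
    lensArea d = 4 * ∫ s in d / 2..1, √(1 - s ^ 2) := by
  rw [integral_sqrt_one_sub_sq_eq ⟨by linarith [hd.1], by linarith [hd.2]⟩ (by norm_num),
    arcsin_one, lensArea, div_pow]
  norm_num
  ring

lemma lensArea_nonneg {d : ℝ} (hd : d ∈ Icc (-2) 2) : 0 ≤ lensArea d := by
  have : 0 ≤ ∫ s in d / 2..1, √(1 - s ^ 2) :=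
    integral_nonneg (by linarith [hd.2]) fun _ _ => sqrt_nonneg _
  rw [lensArea_eq_integral hd]
  positivity

lemma hasDerivAt_mul_lensArea_primitive {y : ℝ} (h₁ : -2 < y) (h₂ : y < 2) :
    HasDerivAt (fun y => π * y ^ 2 / 2 + (1 - y ^ 2) * arcsin (y / 2)
      - (y / 2 + y ^ 3 / 4) * √(1 - y ^ 2 / 4)) (y * lensArea y) y := by
  have hpos : 0 < 1 - y ^ 2 / 4 := by nlinarith
  have harcsin : HasDerivAt (fun y => arcsin (y / 2)) (1 / √(1 - (y / 2) ^ 2) * (1 / 2)) y :=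
    (hasDerivAt_arcsin (x := y / 2) (by linarith) (by linarith)).comp (h := fun y => y / 2) y
      ((hasDerivAt_id' y).div_const 2)
  have hsqrt : HasDerivAt (fun y => √(1 - y ^ 2 / 4)) (-(y / 2) / (2 * √(1 - y ^ 2 / 4))) y :=
    (((hasDerivAt_pow 2 y).div_const 4).const_sub 1 |>.congr_deriv (by push_cast; ring)).sqrt
      hpos.ne'
  refine ((((hasDerivAt_pow 2 y).const_mul π).div_const 2).fun_add
    (((hasDerivAt_pow 2 y).const_sub 1).fun_mul harcsin)).fun_sub
    ((((hasDerivAt_id' y).div_const 2).fun_add ((hasDerivAt_pow 3 y).div_const 4)).fun_mul hsqrt)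
    |>.congr_deriv ?_
  rw [div_pow, show (2 : ℝ) ^ 2 = 4 by norm_num]
  simp only [lensArea]
  set q := √(1 - y ^ 2 / 4)
  have hq : q ^ 2 = 1 - y ^ 2 / 4 := sq_sqrt hpos.le
  have hne : q ≠ 0 := (sqrt_pos.mpr hpos).ne'
  field_simp
  linear_combination (8 * y ^ 2 - 16) * hq

lemma integral_mul_lensArea : ∫ y in (0 : ℝ)..1, y * lensArea y = π / 2 - 3 * √3 / 8 := by
  rw [integral_eq_sub_of_hasDerivAt (fun y hy => hasDerivAt_mul_lensArea_primitive ?_ ?_)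
    ((continuous_id.mul continuous_lensArea).intervalIntegrable _ _)]
  · have h3 : √(1 - 1 ^ 2 / 4 : ℝ) = √3 / 2 := by
      rw [show (1 - 1 ^ 2 / 4 : ℝ) = 3 / 2 ^ 2 by norm_num, sqrt_div' _ (by norm_num),
        sqrt_sq (by norm_num)]
    norm_num [h3]
    ring
  all_goals rw [uIcc_of_le zero_le_one] at hy; linarith [hy.1, hy.2]

lemma Real.volume_setOf_sq_le (m : ℝ) :
    volume {t : ℝ | t ^ 2 ≤ m} = ENNReal.ofReal (2 * √m) := by
  rcases le_or_gt 0 m with hm | hm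
  · have : {t : ℝ | t ^ 2 ≤ m} = Icc (-√m) √m := by
      ext t
      exact sq_le hm
    rw [this, volume_Icc]
    ring_nf
  · have : {t : ℝ | t ^ 2 ≤ m} = ∅ :=
      eq_empty_of_forall_notMem fun t ht => (sq_nonneg t).not_gt (ht.trans_lt hm)
    rw [this, measure_empty, sqrt_eq_zero_of_nonpos hm.le, mul_zero, ENNReal.ofReal_zero]

/-- Chord of the unit discs centred at `(0, 0)` and `(d, 0)` at abscissa `s`; as `√` sends
negative numbers to `0`, it vanishes off the lens. -/
def lensChord (d s : ℝ) : ℝ := 2 * √(min (1 - s ^ 2) (1 - (s - d) ^ 2))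

lemma continuous_lensChord (d : ℝ) : Continuous (lensChord d) := by
  unfold lensChord
  fun_prop

lemma lensChord_eq_zero {d s : ℝ} (hs : s ∉ Icc (d - 1) 1) : lensChord d s = 0 := by
  rw [mem_Icc, not_and_or, not_le, not_le] at hs
  rw [lensChord, sqrt_eq_zero_of_nonpos, mul_zero]
  rcases hs with hs | hs
  · exact (min_le_right _ _).trans (by nlinarith)
  · exact (min_le_left _ _).trans (by nlinarith)

lemma lensChord_of_half_le {d s : ℝ} (hd : 0 ≤ d) (hs : d / 2 ≤ s) :
    lensChord d s = 2 * √(1 - s ^ 2) := by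
  rw [lensChord, min_eq_left (by nlinarith)]

lemma lensChord_sub_left (d s : ℝ) : lensChord d (d - s) = lensChord d s := by
  rw [lensChord, lensChord, min_comm]
  ring_nf

lemma integral_lensChord {d : ℝ} (hd₀ : 0 ≤ d) (hd₂ : d ≤ 2) :
    ∫ s, lensChord d s = lensArea d := by
  have hint := (continuous_lensChord d).intervalIntegrable (μ := volume)
  have hhalf : ∫ s in d / 2..1, lensChord d s = 2 * ∫ s in d / 2..1, √(1 - s ^ 2) := by
    rw [← intervalIntegral.integral_const_mul]
    refine integral_congr fun s hs => ?_
    rw [uIcc_of_le (by linarith)] at hs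
    exact lensChord_of_half_le hd₀ hs.1
  have hsymm : ∫ s in d - 1..d / 2, lensChord d s = ∫ s in d / 2..1, lensChord d s :=
    calc ∫ s in d - 1..d / 2, lensChord d s = ∫ s in d - 1..d / 2, lensChord d (d - s) := by
          simp only [lensChord_sub_left]
      _ = ∫ s in d / 2..1, lensChord d s := by
          rw [intervalIntegral.integral_comp_sub_left (lensChord d) d]
          ring_nf
  rw [← setIntegral_eq_integral_of_forall_compl_eq_zero fun s hs => lensChord_eq_zero hs,
    integral_Icc_eq_integral_Ioc, ← integral_of_le (by linarith),
    ← integral_add_adjacent_intervals (hint _ _) (hint _ _), hsymm, hhalf,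
    lensArea_eq_integral ⟨by linarith, hd₂⟩]
  ring

lemma volume_lens_prod {d : ℝ} (hd₀ : 0 ≤ d) (hd₂ : d ≤ 2) :
    volume {p : ℝ × ℝ | p.1 ^ 2 + p.2 ^ 2 ≤ 1 ∧ (p.1 - d) ^ 2 + p.2 ^ 2 ≤ 1}
      = ENNReal.ofReal (lensArea d) := by
  set L := {p : ℝ × ℝ | p.1 ^ 2 + p.2 ^ 2 ≤ 1 ∧ (p.1 - d) ^ 2 + p.2 ^ 2 ≤ 1} with hL
  have hmeas : MeasurableSet L := by
    rw [hL, ofPred_and]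
    exact (measurableSet_le (by fun_prop) (by fun_prop)).inter
      (measurableSet_le (by fun_prop) (by fun_prop))
  have hslice (s : ℝ) :
      Prod.mk s ⁻¹' L = {t : ℝ | t ^ 2 ≤ min (1 - s ^ 2) (1 - (s - d) ^ 2)} := by
    ext t
    simp only [mem_preimage, mem_ofPred_eq, le_min_iff]
    constructor <;> rintro ⟨h₁, h₂⟩ <;> constructor <;> linarith
  have hint : Integrable (lensChord d) :=
    (continuous_lensChord d).integrable_of_hasCompactSupport
      (HasCompactSupport.intro isCompact_Icc fun s hs => lensChord_eq_zero hs)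
  rw [Measure.volume_eq_prod, Measure.prod_apply hmeas]
  simp_rw [hslice, Real.volume_setOf_sq_le]
  rw [← integral_lensChord hd₀ hd₂, ofReal_integral_eq_lintegral_ofReal hint
    (Filter.Eventually.of_forall fun s => by simp only [lensChord]; positivity)]
  rfl

lemma volume_closedBall_inter_closedBall_eq_of_norm_eq {E : Type*} [NormedAddCommGroup E]
    [InnerProductSpace ℝ E] [FiniteDimensional ℝ E] [MeasurableSpace E] [BorelSpace E]
    {x y : E} (h : ‖x‖ = ‖y‖) (ρ : ℝ) :
    volume (closedBall 0 ρ ∩ closedBall x ρ) = volume (closedBall (0 : E) ρ ∩ closedBall y ρ) := by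
  let e := (ℝ ∙ (x - y))ᗮ.reflection
  have hpre : e ⁻¹' (closedBall 0 ρ ∩ closedBall y ρ) = closedBall 0 ρ ∩ closedBall x ρ := by
    have h0 : e ⁻¹' closedBall 0 ρ = closedBall 0 ρ := by simp
    rw [preimage_inter, h0, ← Submodule.reflection_sub h, e.isometry.preimage_closedBall]
  rw [← hpre, e.measurePreserving.measure_preimage
    (isClosed_closedBall.inter isClosed_closedBall).nullMeasurableSet]

local notation "ℝ²" => EuclideanSpace ℝ (Fin 2)

lemma EuclideanSpace.norm_le_one_iff_fin_two (y : ℝ²) : ‖y‖ ≤ 1 ↔ y 0 ^ 2 + y 1 ^ 2 ≤ 1 := by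
  rw [EuclideanSpace.norm_eq, Fin.sum_univ_two, sqrt_le_left zero_le_one]
  simp

lemma volume_closedBall_inter_closedBall_single {d : ℝ} (hd₀ : 0 ≤ d) (hd₂ : d ≤ 2) :
    volume (closedBall (0 : ℝ²) 1 ∩ closedBall (EuclideanSpace.single 0 d) 1)
      = ENNReal.ofReal (lensArea d) := by
  let e := (MeasurableEquiv.toLp 2 (Fin 2 → ℝ)).symm.trans MeasurableEquiv.finTwoArrow
  have he : MeasurePreserving e := (volume_preserving_finTwoArrow ℝ).comp
    (EuclideanSpace.volume_preserving_symm_measurableEquiv_toLp (Fin 2))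
  have hpre : e ⁻¹' {p : ℝ × ℝ | p.1 ^ 2 + p.2 ^ 2 ≤ 1 ∧ (p.1 - d) ^ 2 + p.2 ^ 2 ≤ 1}
      = closedBall 0 1 ∩ closedBall (EuclideanSpace.single 0 d) 1 := by
    ext y
    simp [e, dist_eq_norm, EuclideanSpace.norm_le_one_iff_fin_two]
  rw [← hpre, he.measure_preimage_equiv, volume_lens_prod hd₀ hd₂]

lemma volume_closedBall_inter_closedBall (x : ℝ²) (hx : ‖x‖ ≤ 2) :
    volume (closedBall 0 1 ∩ closedBall x 1) = ENNReal.ofReal (lensArea ‖x‖) := by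
  rw [volume_closedBall_inter_closedBall_eq_of_norm_eq (y := EuclideanSpace.single 0 ‖x‖)
    (by simp), volume_closedBall_inter_closedBall_single (norm_nonneg x) hx]

def triangleRegion {E : Type*} [SeminormedAddCommGroup E] (ρ : ℝ) : Set (E × E) :=
  {p | ‖p.1‖ ≤ ρ ∧ ‖p.2‖ ≤ ρ ∧ ‖p.1 - p.2‖ ≤ ρ}

section TriangleRegion

variable {E : Type*} [SeminormedAddCommGroup E]

lemma triangleRegion_eq_smul [NormedSpace ℝ E] {r : ℝ} (hr : 0 < r) :
    triangleRegion (E := E) r = r • triangleRegion 1 := by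
  ext p
  rw [mem_smul_set_iff_inv_smul_mem₀ hr.ne']
  simp only [triangleRegion, mem_ofPred_eq, Prod.smul_fst, Prod.smul_snd, ← smul_sub, norm_smul,
    norm_inv, norm_of_nonneg hr.le, inv_mul_le_one₀ hr]

lemma measure_prod_triangleRegion [MeasurableSpace E] [OpensMeasurableSpace E]
    [SecondCountableTopology E] (μ : Measure E) [SFinite μ] (ρ : ℝ) :
    μ.prod μ (triangleRegion ρ) =
      ∫⁻ x in closedBall 0 ρ, μ (closedBall 0 ρ ∩ closedBall x ρ) ∂μ := by
  have hclosed : IsClosed (triangleRegion (E := E) ρ) := by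
    rw [triangleRegion, ofPred_and, ofPred_and]
    refine IsClosed.inter ?_ (IsClosed.inter ?_ ?_) <;>
      exact isClosed_le (by fun_prop) continuous_const
  rw [Measure.prod_apply hclosed.measurableSet, ← lintegral_indicator measurableSet_closedBall]
  congr 1 with x
  by_cases hx : ‖x‖ ≤ ρ
  · have : Prod.mk x ⁻¹' triangleRegion ρ = closedBall 0 ρ ∩ closedBall x ρ := by
      ext y
      simp [triangleRegion, hx, dist_eq_norm, norm_sub_rev x y]
    rw [this, indicator_of_mem (by simpa using hx)]
  · have : Prod.mk x ⁻¹' triangleRegion ρ = ∅ := by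
      ext y
      simp [triangleRegion, hx]
    rw [this, measure_empty, indicator_of_notMem (by simpa using hx)]

end TriangleRegion

lemma setIntegral_closedBall_fun_norm {E F : Type*} [NormedAddCommGroup E] [NormedSpace ℝ E]
    [FiniteDimensional ℝ E] [MeasurableSpace E] [BorelSpace E] [Nontrivial E]
    [NormedAddCommGroup F] [NormedSpace ℝ F]
    (μ : Measure E) [μ.IsAddHaarMeasure] (f : ℝ → F) {R : ℝ} (hR : 0 ≤ R) :
    ∫ x in closedBall 0 R, f ‖x‖ ∂μ = Module.finrank ℝ E • μ.real (ball 0 1) •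
      ∫ y in 0..R, y ^ (Module.finrank ℝ E - 1) • f y := by
  have hball : closedBall (0 : E) R = (fun x => ‖x‖) ⁻¹' Iic R := by
    ext x; simp
  rw [← MeasureTheory.integral_indicator measurableSet_closedBall, hball]
  have hindicator : (((fun x : E => ‖x‖) ⁻¹' Iic R).indicator fun x => f ‖x‖) =
      fun x => (Iic R).indicator f ‖x‖ := by
    ext x; by_cases hx : ‖x‖ ≤ R <;> simp [hx]
  rw [hindicator, integral_fun_norm_addHaar μ, integral_of_le hR, ← Ioi_inter_Iic,
    ← setIntegral_indicator measurableSet_Iic]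
  congr 3 with y
  simp [indicator_apply]

lemma volume_triangleRegion_one :
    (volume : Measure ℝ²).prod volume (triangleRegion 1) =
      ENNReal.ofReal ((π - 3 * √3 / 4) * π) := by
  have hnonneg : ∀ x ∈ closedBall (0 : ℝ²) 1, 0 ≤ lensArea ‖x‖ := fun x hx =>
    lensArea_nonneg ⟨by linarith [norm_nonneg x], by linarith [mem_closedBall_zero_iff.mp hx]⟩
  have hint : IntegrableOn (fun x : ℝ² => lensArea ‖x‖) (closedBall 0 1) :=
    (continuous_lensArea.comp continuous_norm).continuousOn.integrableOn_compact
      (isCompact_closedBall _ _)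
  calc (volume : Measure ℝ²).prod volume (triangleRegion 1)
      = ∫⁻ x in closedBall (0 : ℝ²) 1, ENNReal.ofReal (lensArea ‖x‖) := by
        rw [measure_prod_triangleRegion]
        exact setLIntegral_congr_fun measurableSet_closedBall fun x hx =>
          volume_closedBall_inter_closedBall x (by linarith [mem_closedBall_zero_iff.mp hx])
    _ = ENNReal.ofReal (∫ x in closedBall (0 : ℝ²) 1, lensArea ‖x‖) :=
        (ofReal_integral_eq_lintegral_ofReal hint
          (ae_restrict_of_forall_mem measurableSet_closedBall hnonneg)).symm
    _ = ENNReal.ofReal (2 * π * ∫ y in (0 : ℝ)..1, y * lensArea y) := by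
        rw [setIntegral_closedBall_fun_norm volume _ zero_le_one, finrank_euclideanSpace_fin,
          measureReal_def, EuclideanSpace.volume_ball_fin_two]
        norm_num [ENNReal.toReal_ofReal pi_pos.le, mul_assoc]
    _ = ENNReal.ofReal ((π - 3 * √3 / 4) * π) := by
        rw [integral_mul_lensArea]
        ring_nf

/-- For every `r > 0`, the 4-dimensional Lebesgue measure of
`{(x, y) ∈ ℝ² × ℝ² : ‖x‖ ≤ r, ‖y‖ ≤ r, ‖x − y‖ ≤ r}` (Euclidean norm on `ℝ²`)
equals `(π − 3√3/4) · π · r⁴`. -/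
theorem volume_triangle_region_two_dim (r : ℝ) (hr : 0 < r) :
    volume {p : EuclideanSpace ℝ (Fin 2) × EuclideanSpace ℝ (Fin 2) |
        ‖p.1‖ ≤ r ∧ ‖p.2‖ ≤ r ∧ ‖p.1 - p.2‖ ≤ r}
      = ENNReal.ofReal ((Real.pi - 3 * Real.sqrt 3 / 4) * Real.pi * r ^ 4) := by
  have hdim : Module.finrank ℝ (ℝ² × ℝ²) = 4 := by simp
  change volume (triangleRegion r) = _
  rw [Measure.volume_eq_prod, triangleRegion_eq_smul hr, Measure.addHaar_smul, hdim,
    volume_triangleRegion_one, ← ENNReal.ofReal_mul (by positivity), abs_of_pos (by positivity)]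
  ring_nf
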